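/- arXiv:1706.09291 — 3 statements merged into one kernel-verified Lean document; each statement's English description precedes it below -/
import Mathlib

section
/- If the limit point P_L of a proper parametrization P(t) of a rational curve C is reached by the parametrization (i.e., there exists t₀ ∈ K with P(t₀) = P_L), then P_L is a singular point of C, i.e., mult_{P_L}(C) ≥ 2. -/
open Polynomial

def projEqParam {K : Type*} [Field K] (p₁ p₂ p : K[X]) (x y : K) : Prop :=
  p₁.eval x * p.eval y = p.eval x * p₁.eval y ∧
  p₂.eval x * p.eval y = p.eval x * p₂.eval y ∧
  p₁.eval x * p₂.eval y = p₂.eval x * p₁.eval y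

/-- Properness (birationality) of the parametrization. -/
def IsProperParam {K : Type*} [Field K] (p₁ p₂ p : K[X]) : Prop :=
  {x : K | ∃ y : K, y ≠ x ∧ projEqParam p₁ p₂ p x y}.Finite

/-- The parametrized curve is not a line. -/
def NotLine {K : Type*} [Field K] (p₁ p₂ p : K[X]) : Prop :=
  ¬ ∃ a b c : K, (a ≠ 0 ∨ b ≠ 0 ∨ c ≠ 0) ∧ C a * p₁ + C b * p₂ + C c * p = 0

/-- Degree-`d` homogenization of `r`, as an element of `(K[h])[t]`
(inner variable `h`, outer variable `t`). -/
noncomputable def homog {K : Type*} [Field K] (d : ℕ) (r : K[X]) :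
    Polynomial (Polynomial K) :=
  ∑ j ∈ Finset.range (d + 1), Polynomial.C (Polynomial.C (r.coeff j) * X ^ (d - j)) * X ^ j

/-- Total degree of an element of `(K[h])[t]`. -/
noncomputable def totalDeg {K : Type*} [Field K] (F : Polynomial (Polynomial K)) : ℕ :=
  F.support.sup fun j => j + (F.coeff j).natDegree

/-- The homogeneous fibre function of the projective point `(a : b : c)` with respect
to the homogeneous parametrization `(p̄₁ : p̄₂ : p̄)` of degree `d`. -/
noncomputable def homogFibre {K : Type*} [Field K] [DecidableEq K]
    (p₁ p₂ p : K[X]) (d : ℕ) (a b c : K) : Polynomial (Polynomial K) :=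
  gcd (gcd (Polynomial.C (Polynomial.C a) * homog d p - Polynomial.C (Polynomial.C c) * homog d p₁)
        (Polynomial.C (Polynomial.C b) * homog d p - Polynomial.C (Polynomial.C c) * homog d p₂))
    (Polynomial.C (Polynomial.C a) * homog d p₂ - Polynomial.C (Polynomial.C b) * homog d p₁)

/-- Multiplicity of the curve at the point `(a : b : c)`: the (total) degree of its
homogeneous fibre function. -/
noncomputable def multAt {K : Type*} [Field K] [DecidableEq K]
    (p₁ p₂ p : K[X]) (d : ℕ) (a b c : K) : ℕ :=
  totalDeg (homogFibre p₁ p₂ p d a b c)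

/-! The limit point is `U(0)` for the reparametrization `U(t) = P(1/t)`, so in homogeneous
coordinates `(t : h)` every generator of its fibre function vanishes at `h = 0`. If `P(t₀) = P_L`,
they also vanish at `(t₀ : 1)`. Since the fibre function is not zero (the curve is not a line),
it is divisible by both `h` and `t - t₀ h`, and thus has degree at least `2`. -/

section Homogenization

variable {K : Type*} [Field K]

lemma homog_coeff {d j : ℕ} (r : K[X]) (hj : j ≤ d) :
    (homog d r).coeff j = Polynomial.C (r.coeff j) * X ^ (d - j) := by
  simp only [homog, finsetSum_coeff, C_mul_X_pow_eq_monomial, coeff_monomial]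
  rw [Finset.sum_eq_single_of_mem j (Finset.mem_range_succ_iff.mpr hj) fun i _ hi => if_neg hi]
  exact if_pos rfl

lemma homog_C_mul_sub_C_mul (d : ℕ) (a c : K) (r s : K[X]) :
    homog d (Polynomial.C a * r - Polynomial.C c * s)
      = Polynomial.C (Polynomial.C a) * homog d r - Polynomial.C (Polynomial.C c) * homog d s := by
  simp only [homog, Finset.mul_sum, ← Finset.sum_sub_distrib, coeff_sub, coeff_C_mul, map_sub,
    map_mul]
  refine Finset.sum_congr rfl fun j _ => ?_
  ring

lemma eq_zero_of_homog_eq_zero {d : ℕ} {r : K[X]} (hr : r.natDegree ≤ d) (h : homog d r = 0) :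
    r = 0 := by
  ext j
  rcases le_or_gt j d with hj | hj
  · have hcoeff := homog_coeff r hj
    rw [h, coeff_zero, eq_comm, mul_eq_zero, C_eq_zero] at hcoeff
    exact hcoeff.resolve_right (pow_ne_zero _ X_ne_zero)
  · exact coeff_eq_zero_of_natDegree_lt (hr.trans_lt hj)

lemma homog_eval_C_mul_X {d : ℕ} {r : K[X]} (hr : r.natDegree ≤ d) (t₀ : K) :
    (homog d r).eval (Polynomial.C t₀ * X) = Polynomial.C (r.eval t₀) * X ^ d := by
  rw [homog, eval_finsetSum, eval_eq_sum_range' (Nat.lt_succ_of_le hr), map_sum, Finset.sum_mul]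
  refine Finset.sum_congr rfl fun j hj => ?_
  have hX : (X : K[X]) ^ (d - j) * X ^ j = X ^ d := by
    rw [← pow_add, Nat.sub_add_cancel (Finset.mem_range_succ_iff.mp hj)]
  simp only [eval_mul, eval_C, eval_pow, eval_X, map_mul, map_pow, mul_pow]
  linear_combination (Polynomial.C (r.coeff j) * Polynomial.C t₀ ^ j) * hX

lemma C_X_dvd_homog {d : ℕ} {r : K[X]} (h : r.coeff d = 0) :
    Polynomial.C (X : K[X]) ∣ homog d r := by
  refine Finset.dvd_sum fun j hj => ?_
  rcases (Finset.mem_range_succ_iff.mp hj).eq_or_lt with rfl | hjd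
  · simp [h]
  · have hX : X ∣ Polynomial.C (r.coeff j) * X ^ (d - j) :=
      (dvd_pow_self X (Nat.sub_ne_zero_of_lt hjd)).mul_left _
    exact (_root_.map_dvd Polynomial.C hX).mul_right _

lemma X_sub_C_dvd_homog {d : ℕ} {r : K[X]} (hr : r.natDegree ≤ d) {t₀ : K}
    (h : r.IsRoot t₀) :
    X - Polynomial.C (Polynomial.C t₀ * X) ∣ homog d r := by
  rw [dvd_iff_isRoot, IsRoot, homog_eval_C_mul_X hr, h.eq_zero, map_zero, zero_mul]

end Homogenization

section TotalDegree

variable {K : Type*} [Field K]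

lemma le_totalDeg {F : K[X][X]} {j : ℕ} (hj : F.coeff j ≠ 0) :
    j + (F.coeff j).natDegree ≤ totalDeg F :=
  Finset.le_sup (f := fun j => j + (F.coeff j).natDegree) (mem_support_iff.mpr hj)

/-- Here `C X = h` and `X - C (C t₀ * X) = t - t₀ h`. -/
lemma two_le_totalDeg {F : K[X][X]} (hF : F ≠ 0) (hX : Polynomial.C X ∣ F) {t₀ : K}
    (hL : X - Polynomial.C (Polynomial.C t₀ * X) ∣ F) : 2 ≤ totalDeg F := by
  by_contra! hlt
  have hconst : ∀ j, 1 ≤ j → F.coeff j = 0 := fun j hj => by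
    by_contra hne
    have hdeg := natDegree_le_of_dvd ((C_dvd_iff_dvd_coeff _ _).mp hX j) hne
    have := le_totalDeg hne
    rw [natDegree_X] at hdeg
    omega
  have hFC : F = Polynomial.C (F.coeff 0) :=
    eq_C_of_natDegree_le_zero (natDegree_le_iff_coeff_eq_zero.mpr hconst)
  have hroot := dvd_iff_isRoot.mp hL
  rw [hFC, IsRoot, eval_C] at hroot
  exact hF (by rw [hFC, hroot, map_zero])

end TotalDegree

section LimitPoint

variable {K : Type*} [Field K]

/-- Applied to pairs of coordinates of `P`, these generate the fibre function of `P_L`. -/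
noncomputable def leadMinor (d : ℕ) (q s : K[X]) : K[X] :=
  Polynomial.C (q.coeff d) * s - Polynomial.C (s.coeff d) * q

lemma natDegree_leadMinor_le {d : ℕ} {q s : K[X]} (hq : q.natDegree ≤ d)
    (hs : s.natDegree ≤ d) :
    (leadMinor d q s).natDegree ≤ d :=
  (natDegree_sub_le _ _).trans <|
    max_le ((natDegree_C_mul_le _ _).trans hs) ((natDegree_C_mul_le _ _).trans hq)

lemma coeff_leadMinor_self (d : ℕ) (q s : K[X]) : (leadMinor d q s).coeff d = 0 := by
  simp only [leadMinor, coeff_sub, coeff_C_mul]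
  ring

lemma isRoot_leadMinor_iff {d : ℕ} {q s : K[X]} {t : K} :
    (leadMinor d q s).IsRoot t ↔ q.coeff d * s.eval t - s.coeff d * q.eval t = 0 := by
  simp only [IsRoot, leadMinor, eval_sub, eval_mul, eval_C]

lemma homogFibre_eq_gcd [DecidableEq K] (p₁ p₂ p : K[X]) (d : ℕ) :
    homogFibre p₁ p₂ p d (p₁.coeff d) (p₂.coeff d) (p.coeff d) =
      gcd (gcd (homog d (leadMinor d p₁ p)) (homog d (leadMinor d p₂ p)))
        (homog d (leadMinor d p₁ p₂)) := by
  simp only [homogFibre, leadMinor, homog_C_mul_sub_C_mul]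

lemma NotLine.ne_zero {p₁ p₂ p : K[X]} (hline : NotLine p₁ p₂ p) :
    ¬(p₁ = 0 ∧ p₂ = 0 ∧ p = 0) := by
  rintro ⟨rfl, rfl, rfl⟩
  exact hline ⟨1, 0, 0, Or.inl one_ne_zero, by simp⟩

lemma NotLine.eq_zero_of_minors_eq_zero {p₁ p₂ p : K[X]} (hline : NotLine p₁ p₂ p)
    {a b c : K}
    (h₁ : Polynomial.C a * p - Polynomial.C c * p₁ = 0)
    (h₂ : Polynomial.C b * p - Polynomial.C c * p₂ = 0) : a = 0 ∧ b = 0 ∧ c = 0 := by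
  have hac : a = 0 ∧ c = 0 := by
    by_contra hac
    refine hline ⟨-c, 0, a, ?_, by simp only [map_neg, map_zero]; linear_combination h₁⟩
    by_contra! h
    exact hac ⟨h.2.2, neg_eq_zero.mp h.1⟩
  refine ⟨hac.1, ?_, hac.2⟩
  by_contra hb
  exact hline ⟨0, -c, b, Or.inr (Or.inr hb),
    by simp only [map_neg, map_zero]; linear_combination h₂⟩

lemma coeff_ne_zero_of_eq_max_natDegree {p₁ p₂ p : K[X]}
    (h : ¬(p₁ = 0 ∧ p₂ = 0 ∧ p = 0))
    {d : ℕ} (hd : d = max (max p₁.natDegree p₂.natDegree) p.natDegree) :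
    p₁.coeff d ≠ 0 ∨ p₂.coeff d ≠ 0 ∨ p.coeff d ≠ 0 := by
  by_contra! hcoeff
  have hlt : ∀ q : K[X], q.natDegree ≤ d → q.coeff d = 0 → q = 0 ∨ q.natDegree < d :=
    fun q hq hc => hq.lt_or_eq.symm.imp (fun hqd => leadingCoeff_eq_zero.mp (by
      rwa [leadingCoeff, hqd])) id
  rcases hlt p₁ (by omega) hcoeff.1 with rfl | _ <;>
    rcases hlt p₂ (by omega) hcoeff.2.1 with rfl | _ <;>
    rcases hlt p (by omega) hcoeff.2.2 with rfl | _ <;> simp_all <;> omega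

end LimitPoint

theorem limit_point_reached_singular_general (K : Type*) [Field K] [DecidableEq K]
    (p₁ p₂ p : K[X])
    (hline : NotLine p₁ p₂ p)
    (d : ℕ) (hd : d = max (max p₁.natDegree p₂.natDegree) p.natDegree)
    (a b c : K) (ha : a = p₁.coeff d) (hb : b = p₂.coeff d) (hc : c = p.coeff d)
    (t₀ : K)
    (h₁ : a * p.eval t₀ - c * p₁.eval t₀ = 0)
    (h₂ : b * p.eval t₀ - c * p₂.eval t₀ = 0)
    (h₃ : a * p₂.eval t₀ - b * p₁.eval t₀ = 0) :
    2 ≤ multAt p₁ p₂ p d a b c := by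
  subst ha hb hc
  have hdeg₁ : p₁.natDegree ≤ d := by omega
  have hdeg₂ : p₂.natDegree ≤ d := by omega
  have hdeg : p.natDegree ≤ d := by omega
  rw [multAt, homogFibre_eq_gcd]
  refine two_le_totalDeg ?_ ?_ (t₀ := t₀) ?_
  · rw [Ne, gcd_eq_zero_iff, gcd_eq_zero_iff]
    rintro ⟨⟨hz₁, hz₂⟩, -⟩
    have hlead_eq_zero := hline.eq_zero_of_minors_eq_zero
      (eq_zero_of_homog_eq_zero (natDegree_leadMinor_le hdeg₁ hdeg) hz₁)
      (eq_zero_of_homog_eq_zero (natDegree_leadMinor_le hdeg₂ hdeg) hz₂)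
    have hlead_ne_zero := coeff_ne_zero_of_eq_max_natDegree hline.ne_zero hd
    tauto
  · exact dvd_gcd (dvd_gcd (C_X_dvd_homog (coeff_leadMinor_self ..))
      (C_X_dvd_homog (coeff_leadMinor_self ..))) (C_X_dvd_homog (coeff_leadMinor_self ..))
  · exact dvd_gcd (dvd_gcd
      (X_sub_C_dvd_homog (natDegree_leadMinor_le hdeg₁ hdeg) (isRoot_leadMinor_iff.mpr h₁))
      (X_sub_C_dvd_homog (natDegree_leadMinor_le hdeg₂ hdeg) (isRoot_leadMinor_iff.mpr h₂)))
      (X_sub_C_dvd_homog (natDegree_leadMinor_le hdeg₁ hdeg₂) (isRoot_leadMinor_iff.mpr h₃))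

/-- If the limit point `P_L = (a_d : b_d : c_d)` of a proper parametrization of a
rational curve (not a line) is reached by the parametrization, then it is a singular
point: its multiplicity is at least `2`. -/
theorem limit_point_reached_singular (K : Type*) [Field K] [DecidableEq K]
    [IsAlgClosed K] [CharZero K] (p₁ p₂ p : K[X])
    (hgcd : IsUnit (gcd (gcd p₁ p₂) p))
    (hproper : IsProperParam p₁ p₂ p) (hline : NotLine p₁ p₂ p)
    (d : ℕ) (hd : d = max (max p₁.natDegree p₂.natDegree) p.natDegree)
    (a b c : K) (ha : a = p₁.coeff d) (hb : b = p₂.coeff d) (hc : c = p.coeff d)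
    (t₀ : K)
    (h₁ : a * p.eval t₀ - c * p₁.eval t₀ = 0)
    (h₂ : b * p.eval t₀ - c * p₂.eval t₀ = 0)
    (h₃ : a * p₂.eval t₀ - b * p₁.eval t₀ = 0) :
    2 ≤ multAt p₁ p₂ p d a b c :=
  limit_point_reached_singular_general K p₁ p₂ p hline d hd a b c ha hb hc t₀ h₁ h₂ h₃
end

section
/- Let P(t) be a proper parametrization with limit point P_L unreachable via P (no t₀ ∈ K with P(t₀) = P_L). Let U(t) = P(1/t) (with components the degree-d reversals of p₁, p₂, p), and let H_L^U(t) be the gcd of the fibre-function polynomials of P_L with respect to U. Then H_L^U(t) = t^r for some integer r ≥ 1. -/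
open Polynomial

/-- The fibre function of the projective point `(a : b : c)` with respect to the
parametrization `(p₁ : p₂ : p)`. -/
noncomputable def fibreFun {K : Type*} [Field K] [DecidableEq K]
    (p₁ p₂ p : K[X]) (a b c : K) : K[X] :=
  gcd (gcd (C a * p - C c * p₁) (C b * p - C c * p₂)) (C a * p₂ - C b * p₁)

/-
For `x ≠ 0`, reversal matches the roots `x` of the fibre function via `U` with the roots `x⁻¹`
via `P`, of which unreachability leaves none. At `x = 0` each component evaluates to the
`t^d`-coefficient of `a·p - c·p₁` (etc.), which is `a c - c a = 0`. Over an algebraically closed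
field, a polynomial whose roots are exactly `{0}` is `c₀ t^r` with `c₀ ≠ 0` and `r ≥ 1`.
-/

namespace Polynomial

variable {K : Type*} [Field K]

lemma isRoot_reflect_iff {d : ℕ} {q : K[X]} (hq : q.natDegree ≤ d) {x : K} (hx : x ≠ 0) :
    (reflect d q).IsRoot x ↔ q.IsRoot x⁻¹ := by
  let : Invertible x⁻¹ := invertibleOfNonzero (inv_ne_zero hx)
  have h := eval₂_reflect_eq_zero_iff (RingHom.id K) x⁻¹ d q hq
  rwa [invOf_eq_inv, inv_inv, eval₂_id, eval₂_id] at h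

lemma reflect_C_mul_sub_C_mul (d : ℕ) (x y : K) (q₁ q₂ : K[X]) :
    reflect d (C x * q₁ - C y * q₂) = C x * reflect d q₁ - C y * reflect d q₂ := by
  rw [reflect_sub, reflect_C_mul, reflect_C_mul]

lemma natDegree_C_mul_sub_C_mul_le {d : ℕ} {q₁ q₂ : K[X]} (hq₁ : q₁.natDegree ≤ d)
    (hq₂ : q₂.natDegree ≤ d) (x y : K) : (C x * q₁ - C y * q₂).natDegree ≤ d :=
  (natDegree_sub_le_of_le ((natDegree_C_mul_le x q₁).trans hq₁)
    ((natDegree_C_mul_le y q₂).trans hq₂)).trans (max_self d).le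

lemma exists_eq_C_mul_X_pow_of_isRoot_iff_eq_zero [IsAlgClosed K] {f : K[X]}
    (hf : ∀ x, f.IsRoot x ↔ x = 0) : ∃ r : ℕ, 1 ≤ r ∧ ∃ c₀ : K, c₀ ≠ 0 ∧ f = C c₀ * X ^ r := by
  have hf0 : f ≠ 0 := fun h => one_ne_zero ((hf 1).1 (by simp [h]))
  have hroots : f.roots = Multiset.replicate (Multiset.card f.roots) 0 :=
    Multiset.eq_replicate.2 ⟨rfl, fun x hx => (hf x).1 (isRoot_of_mem_roots hx)⟩
  refine ⟨Multiset.card f.roots, ?_, f.leadingCoeff, leadingCoeff_ne_zero.2 hf0, ?_⟩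
  · exact Multiset.card_pos_iff_exists_mem.2 ⟨0, (mem_roots hf0).2 ((hf 0).2 rfl)⟩
  · conv_lhs => rw [(IsAlgClosed.splits f).eq_prod_roots, hroots]
    simp [Multiset.prod_replicate]

end Polynomial

section FibreFunction

variable {K : Type*} [Field K] [DecidableEq K]

lemma isRoot_fibreFun_iff {p₁ p₂ p : K[X]} {a b c x : K} :
    (fibreFun p₁ p₂ p a b c).IsRoot x ↔ (C a * p - C c * p₁).IsRoot x ∧
      (C b * p - C c * p₂).IsRoot x ∧ (C a * p₂ - C b * p₁).IsRoot x := by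
  simp only [fibreFun, ← dvd_iff_isRoot, dvd_gcd_iff, and_assoc]

lemma isRoot_fibreFun_reflect_iff {d : ℕ} {p₁ p₂ p : K[X]} (hp₁ : p₁.natDegree ≤ d)
    (hp₂ : p₂.natDegree ≤ d) (hp : p.natDegree ≤ d) (a b c : K) {x : K} (hx : x ≠ 0) :
    (fibreFun (reflect d p₁) (reflect d p₂) (reflect d p) a b c).IsRoot x ↔
      (fibreFun p₁ p₂ p a b c).IsRoot x⁻¹ := by
  simp only [isRoot_fibreFun_iff, ← reflect_C_mul_sub_C_mul,
    isRoot_reflect_iff (natDegree_C_mul_sub_C_mul_le hp hp₁ _ _) hx,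
    isRoot_reflect_iff (natDegree_C_mul_sub_C_mul_le hp hp₂ _ _) hx,
    isRoot_reflect_iff (natDegree_C_mul_sub_C_mul_le hp₂ hp₁ _ _) hx]

lemma isRoot_fibreFun_reflect_coeff_zero (d : ℕ) (p₁ p₂ p : K[X]) :
    (fibreFun (reflect d p₁) (reflect d p₂) (reflect d p)
      (p₁.coeff d) (p₂.coeff d) (p.coeff d)).IsRoot 0 := by
  rw [isRoot_fibreFun_iff]
  simp only [IsRoot.def, ← coeff_zero_eq_eval_zero, coeff_sub, coeff_C_mul, coeff_reflect,
    revAt_zero]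
  exact ⟨by ring, by ring, by ring⟩

end FibreFunction

theorem fibre_limit_unreachable_general (K : Type*) [Field K] [DecidableEq K]
    [IsAlgClosed K] (p₁ p₂ p : K[X])
    (d : ℕ) (hd : d = max (max p₁.natDegree p₂.natDegree) p.natDegree)
    (a b c : K) (ha : a = p₁.coeff d) (hb : b = p₂.coeff d) (hc : c = p.coeff d)
    (hunreach : ∀ t₀ : K, ¬(a * p.eval t₀ - c * p₁.eval t₀ = 0 ∧
      b * p.eval t₀ - c * p₂.eval t₀ = 0 ∧ a * p₂.eval t₀ - b * p₁.eval t₀ = 0)) :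
    ∃ r : ℕ, 1 ≤ r ∧ ∃ c₀ : K, c₀ ≠ 0 ∧
      fibreFun (reflect d p₁) (reflect d p₂) (reflect d p) a b c = C c₀ * X ^ r := by
  have hp₁ : p₁.natDegree ≤ d := by omega
  have hp₂ : p₂.natDegree ≤ d := by omega
  have hp : p.natDegree ≤ d := by omega
  have hno_root : ∀ t, ¬(fibreFun p₁ p₂ p a b c).IsRoot t := fun t => by
    rw [isRoot_fibreFun_iff]
    simpa only [IsRoot.def, eval_sub, eval_mul, eval_C] using hunreach t
  refine exists_eq_C_mul_X_pow_of_isRoot_iff_eq_zero fun x => ⟨fun hx => ?_, ?_⟩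
  · by_contra hx0
    exact hno_root _ ((isRoot_fibreFun_reflect_iff hp₁ hp₂ hp a b c hx0).1 hx)
  · rintro rfl
    subst ha hb hc
    exact isRoot_fibreFun_reflect_coeff_zero d p₁ p₂ p

/-- If the limit point `P_L = (a_d : b_d : c_d)` of a proper parametrization `P(t)` is
unreachable via `P(t)`, then the fibre function of `P_L` with respect to the
reparametrization `U(t) = P(1/t)` (whose components are the degree-`d` reversals)
equals `t^r`, up to a nonzero constant, for some `r ≥ 1`. -/
theorem fibre_limit_unreachable (K : Type*) [Field K] [DecidableEq K]
    [IsAlgClosed K] [CharZero K] (p₁ p₂ p : K[X])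
    (hgcd : IsUnit (gcd (gcd p₁ p₂) p)) (hproper : IsProperParam p₁ p₂ p)
    (d : ℕ) (hd : d = max (max p₁.natDegree p₂.natDegree) p.natDegree)
    (a b c : K) (ha : a = p₁.coeff d) (hb : b = p₂.coeff d) (hc : c = p.coeff d)
    (hunreach : ∀ t₀ : K, ¬(a * p.eval t₀ - c * p₁.eval t₀ = 0 ∧
      b * p.eval t₀ - c * p₂.eval t₀ = 0 ∧ a * p₂.eval t₀ - b * p₁.eval t₀ = 0)) :
    ∃ r : ℕ, 1 ≤ r ∧ ∃ c₀ : K, c₀ ≠ 0 ∧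
      fibreFun (reflect d p₁) (reflect d p₂) (reflect d p) a b c = C c₀ * X ^ r :=
  fibre_limit_unreachable_general K p₁ p₂ p d hd a b c ha hb hc hunreach
end

section
/- Suppose P_L is reachable via P with fibre function H_L(t) = ∏ᵢ(t−sᵢ)^{kᵢ}, where all sᵢ ≠ 0. Then the fibre function of P_L with respect to U(t) = P(1/t) equals, up to a nonzero constant, H_L^U(t) = t^r·∏ᵢ(t − 1/sᵢ)^{kᵢ} for some integer r ≥ 1. -/
open Polynomial

/-! For `x ≠ 0`, reversal `f ↦ reflect d f` (with `deg f ≤ d`) turns the factor `(X - x⁻¹)ᵐ`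
into `(X - x)ᵐ` up to a unit, so the fibre function of `U` has the same multiplicity at `x`
as `H_L` has at `x⁻¹`. At `0` it vanishes, because at the limit point the three generators of
the gcd have vanishing coefficient of degree `d`. Over an algebraically closed field the root
multiplicities determine a polynomial up to its leading coefficient. -/

namespace Polynomial

theorem reflect_pow {R : Type*} [CommSemiring R] {f : R[X]} {N : ℕ} (hf : f.natDegree ≤ N)
    (n : ℕ) : reflect (n * N) (f ^ n) = reflect N f ^ n := by
  induction n with
  | zero => simp
  | succ n ih =>
    rw [pow_succ, add_mul, one_mul, reflect_mul _ _ (natDegree_pow_le_of_le n hf) hf, ih,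
      pow_succ]

theorem reflect_X_sub_C_pow {R : Type*} [CommRing R] (y : R) (m : ℕ) :
    reflect m ((X - C y) ^ m) = (1 - C y * X) ^ m := by
  simpa [reflect_sub, reflect_C] using reflect_pow (natDegree_X_sub_C_le y) m

theorem natDegree_C_mul_sub_C_mul_le_s17 {R : Type*} [Ring R] {f g : R[X]} {d : ℕ}
    (hf : f.natDegree ≤ d) (hg : g.natDegree ≤ d) (a b : R) : (C a * f - C b * g).natDegree ≤ d :=
  (natDegree_sub_le _ _).trans
    (max_le ((natDegree_C_mul_le _ _).trans hf) ((natDegree_C_mul_le _ _).trans hg))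

section Field

variable {K : Type*} [Field K]

theorem X_sub_C_pow_dvd_reflect_of_dvd {f : K[X]} {d m : ℕ} (hf : f.natDegree ≤ d) {y : K}
    (hy : y ≠ 0) (h : (X - C y) ^ m ∣ f) : (X - C y⁻¹) ^ m ∣ reflect d f := by
  rcases eq_or_ne f 0 with rfl | hf0
  · simp
  obtain ⟨q, rfl⟩ := h
  have hdeg : m + q.natDegree ≤ d := by
    rwa [natDegree_mul (pow_ne_zero _ (X_sub_C_ne_zero y)) (right_ne_zero_of_mul hf0),
      natDegree_pow, natDegree_X_sub_C, mul_one] at hf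
  have hfactor : (1 - C y * X : K[X]) = C (-y) * (X - C y⁻¹) := by
    have hC : C y * C y⁻¹ = 1 := by rw [← C_mul, mul_inv_cancel₀ hy, C_1]
    rw [C_neg]
    linear_combination (-1 : K[X]) * hC
  rw [← Nat.add_sub_of_le (le_of_add_le_left hdeg),
    reflect_mul _ _ ((natDegree_pow_le_of_le m (natDegree_X_sub_C_le y)).trans_eq (mul_one m))
      (Nat.le_sub_of_add_le' hdeg),
    reflect_X_sub_C_pow, hfactor, mul_pow]
  exact (dvd_mul_left _ _).mul_right _

theorem X_sub_C_pow_dvd_reflect_iff {f : K[X]} {d m : ℕ} (hf : f.natDegree ≤ d) {x : K}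
    (hx : x ≠ 0) : (X - C x) ^ m ∣ reflect d f ↔ (X - C x⁻¹) ^ m ∣ f := by
  refine ⟨fun h => ?_, fun h => by
    simpa using X_sub_C_pow_dvd_reflect_of_dvd hf (inv_ne_zero hx) h⟩
  simpa using
    X_sub_C_pow_dvd_reflect_of_dvd (natDegree_reflect_le.trans (max_le le_rfl hf)) hx h

theorem rootMultiplicity_eq_of_forall_pow_dvd_iff {f g : K[X]} (hf : f ≠ 0) (hg : g ≠ 0)
    {x y : K} (h : ∀ m, (X - C x) ^ m ∣ f ↔ (X - C y) ^ m ∣ g) :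
    rootMultiplicity x f = rootMultiplicity y g :=
  eq_of_forall_le_iff fun m => by rw [le_rootMultiplicity_iff hf, le_rootMultiplicity_iff hg, h]

theorem rootMultiplicity_X_pow [DecidableEq K] (x : K) (n : ℕ) :
    rootMultiplicity x (X ^ n) = if x = 0 then n else 0 := by
  split_ifs with hx
  · simpa [hx] using rootMultiplicity_X_sub_C_pow (0 : K) n
  · exact rootMultiplicity_eq_zero (by simp [hx])

theorem rootMultiplicity_prod_X_sub_C_pow [DecidableEq K] {ι : Type*} (t : Finset ι)
    (s : ι → K) (k : ι → ℕ) (x : K) :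
    rootMultiplicity x (∏ i ∈ t, (X - C (s i)) ^ k i) =
      ∑ i ∈ t, if x = s i then k i else 0 := by
  rw [← count_roots, roots_prod _ _
    (Finset.prod_ne_zero_iff.2 fun i _ => pow_ne_zero _ (X_sub_C_ne_zero _))]
  simp [roots_pow, Multiset.count_bind, Multiset.count_singleton]

theorem eq_C_leadingCoeff_mul_of_rootMultiplicity_eq [IsAlgClosed K] {f g : K[X]}
    (hg : g.Monic) (h : ∀ x, rootMultiplicity x f = rootMultiplicity x g) :
    f = C f.leadingCoeff * g := by
  classical
  have hroots : f.roots = g.roots :=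
    Multiset.ext.2 fun x => by rw [count_roots, count_roots, h]
  conv_lhs => rw [(IsAlgClosed.splits f).eq_prod_roots, hroots,
    ← (IsAlgClosed.splits g).eq_prod_roots_of_monic hg]

end Field

end Polynomial

section FibreFunction

variable {K : Type*} [Field K] [DecidableEq K] {p₁ p₂ p : K[X]} {a b c : K} {d : ℕ}

theorem dvd_fibreFun_iff {q : K[X]} :
    q ∣ fibreFun p₁ p₂ p a b c ↔
      q ∣ C a * p - C c * p₁ ∧ q ∣ C b * p - C c * p₂ ∧ q ∣ C a * p₂ - C b * p₁ := by
  rw [fibreFun, dvd_gcd_iff, dvd_gcd_iff, and_assoc]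

theorem fibreFun_eq_zero_iff :
    fibreFun p₁ p₂ p a b c = 0 ↔
      C a * p - C c * p₁ = 0 ∧ C b * p - C c * p₂ = 0 ∧ C a * p₂ - C b * p₁ = 0 := by
  rw [fibreFun, gcd_eq_zero_iff, gcd_eq_zero_iff, and_assoc]

theorem fibreFun_reflect_eq_zero_iff :
    fibreFun (reflect d p₁) (reflect d p₂) (reflect d p) a b c = 0 ↔
      fibreFun p₁ p₂ p a b c = 0 := by
  simp only [fibreFun_eq_zero_iff, ← reflect_C_mul, ← reflect_sub, reflect_eq_zero_iff]

theorem X_dvd_fibreFun_reflect (p₁ p₂ p : K[X]) (d : ℕ) :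
    X ∣ fibreFun (reflect d p₁) (reflect d p₂) (reflect d p) (p₁.coeff d) (p₂.coeff d)
      (p.coeff d) := by
  simp only [dvd_fibreFun_iff, ← reflect_C_mul, ← reflect_sub, X_dvd_iff, coeff_reflect,
    revAt_zero, coeff_sub, coeff_C_mul]
  refine ⟨?_, ?_, ?_⟩ <;> ring

theorem rootMultiplicity_fibreFun_reflect (h₁ : p₁.natDegree ≤ d) (h₂ : p₂.natDegree ≤ d)
    (h : p.natDegree ≤ d) {x : K} (hx : x ≠ 0) :
    rootMultiplicity x (fibreFun (reflect d p₁) (reflect d p₂) (reflect d p) a b c) =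
      rootMultiplicity x⁻¹ (fibreFun p₁ p₂ p a b c) := by
  by_cases h0 : fibreFun p₁ p₂ p a b c = 0
  · rw [h0, fibreFun_reflect_eq_zero_iff.2 h0, rootMultiplicity_zero, rootMultiplicity_zero]
  refine rootMultiplicity_eq_of_forall_pow_dvd_iff (mt fibreFun_reflect_eq_zero_iff.1 h0) h0
    fun m => ?_
  simp only [dvd_fibreFun_iff, ← reflect_C_mul, ← reflect_sub,
    X_sub_C_pow_dvd_reflect_iff (natDegree_C_mul_sub_C_mul_le_s17 h h₁ _ _) hx,
    X_sub_C_pow_dvd_reflect_iff (natDegree_C_mul_sub_C_mul_le_s17 h h₂ _ _) hx,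
    X_sub_C_pow_dvd_reflect_iff (natDegree_C_mul_sub_C_mul_le_s17 h₂ h₁ _ _) hx]

end FibreFunction

theorem fibre_limit_reachable_general (K : Type*) [Field K] [DecidableEq K]
    [IsAlgClosed K] (p₁ p₂ p : K[X])
    (d : ℕ) (hd : d = max (max p₁.natDegree p₂.natDegree) p.natDegree)
    (a b c : K) (ha : a = p₁.coeff d) (hb : b = p₂.coeff d) (hc : c = p.coeff d)
    (n : ℕ) (s : Fin n → K) (k : Fin n → ℕ)
    (hs0 : ∀ i, s i ≠ 0)
    (hHL : fibreFun p₁ p₂ p a b c = ∏ i, (X - C (s i)) ^ k i) :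
    ∃ r : ℕ, 1 ≤ r ∧ ∃ c₀ : K, c₀ ≠ 0 ∧
      fibreFun (reflect d p₁) (reflect d p₂) (reflect d p) a b c =
        C c₀ * X ^ r * ∏ i, (X - C (s i)⁻¹) ^ k i := by
  have h₁ : p₁.natDegree ≤ d := hd ▸ (le_max_left _ _).trans (le_max_left _ _)
  have h₂ : p₂.natDegree ≤ d := hd ▸ (le_max_right _ _).trans (le_max_left _ _)
  have h : p.natDegree ≤ d := hd ▸ le_max_right _ _
  set G := fibreFun (reflect d p₁) (reflect d p₂) (reflect d p) a b c
  have hprod_monic (t : Fin n → K) : (∏ i, (X - C (t i)) ^ k i).Monic :=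
    monic_prod_of_monic _ _ fun i _ => (monic_X_sub_C _).pow _
  have hM : (X ^ rootMultiplicity 0 G * ∏ i, (X - C (s i)⁻¹) ^ k i).Monic :=
    (monic_X_pow _).mul (hprod_monic _)
  have hG : G ≠ 0 := by
    rw [Ne, fibreFun_reflect_eq_zero_iff, hHL]
    exact (hprod_monic s).ne_zero
  have hr : 1 ≤ rootMultiplicity 0 G := by
    subst ha hb hc
    simpa [le_rootMultiplicity_iff hG] using X_dvd_fibreFun_reflect p₁ p₂ p d
  have hmult : ∀ x, rootMultiplicity x G =
      rootMultiplicity x (X ^ rootMultiplicity 0 G * ∏ i, (X - C (s i)⁻¹) ^ k i) := by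
    intro x
    rw [rootMultiplicity_mul hM.ne_zero, rootMultiplicity_X_pow, rootMultiplicity_prod_X_sub_C_pow]
    rcases eq_or_ne x 0 with rfl | hx
    · simp [fun i => (hs0 i).symm]
    · rw [if_neg hx, zero_add, rootMultiplicity_fibreFun_reflect h₁ h₂ h hx, hHL,
        rootMultiplicity_prod_X_sub_C_pow]
      simp_rw [inv_eq_iff_eq_inv]
  refine ⟨_, hr, G.leadingCoeff, leadingCoeff_ne_zero.2 hG, ?_⟩
  rw [mul_assoc]
  exact eq_C_leadingCoeff_mul_of_rootMultiplicity_eq hM hmult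

/-- If the limit point `P_L = (a_d : b_d : c_d)` is reachable via `P(t)` with fibre
function `H_L(t) = ∏ᵢ(t − sᵢ)^{kᵢ}` where all `sᵢ ≠ 0`, then the fibre function of
`P_L` with respect to `U(t) = P(1/t)` equals, up to a nonzero constant,
`t^r·∏ᵢ(t − 1/sᵢ)^{kᵢ}` for some `r ≥ 1`. -/
theorem fibre_limit_reachable (K : Type*) [Field K] [DecidableEq K]
    [IsAlgClosed K] [CharZero K] (p₁ p₂ p : K[X])
    (hgcd : IsUnit (gcd (gcd p₁ p₂) p)) (hproper : IsProperParam p₁ p₂ p)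
    (d : ℕ) (hd : d = max (max p₁.natDegree p₂.natDegree) p.natDegree)
    (a b c : K) (ha : a = p₁.coeff d) (hb : b = p₂.coeff d) (hc : c = p.coeff d)
    (n : ℕ) (hn : 1 ≤ n) (s : Fin n → K) (k : Fin n → ℕ)
    (hs : Function.Injective s) (hs0 : ∀ i, s i ≠ 0) (hk : ∀ i, 1 ≤ k i)
    (hHL : fibreFun p₁ p₂ p a b c = ∏ i, (X - C (s i)) ^ k i) :
    ∃ r : ℕ, 1 ≤ r ∧ ∃ c₀ : K, c₀ ≠ 0 ∧
      fibreFun (reflect d p₁) (reflect d p₂) (reflect d p) a b c =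
        C c₀ * X ^ r * ∏ i, (X - C (s i)⁻¹) ^ k i :=
  fibre_limit_reachable_general K p₁ p₂ p d hd a b c ha hb hc n s k hs0 hHL
end
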